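/- arXiv:2410.12231 — 2 statements merged into one kernel-verified Lean document; each statement's English description precedes it below -/
import Mathlib

section
/- For the complete graph on n vertices, the chromatic quasisymmetric function (restricted to variables x₁,…,x_N with parameter t) equals [n]_t! · e_n(x₁,…,x_N), where the chromatic quasisymmetric function is defined as the sum over proper colorings κ : [n] → [N] of t^{asc(κ)} x_{κ(1)}⋯x_{κ(n)}, with asc(κ) = #{edges {i,j}, i < j, with κ(i) < κ(j)}. -/
/-!
Grouping the proper colourings `κ` by their image `s`, every colouring with image `s` is
`g ∘ σ` for the increasing enumeration `g` of `s` and a unique permutation `σ`, and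
`asc (g ∘ σ) = asc σ`. So each fibre contributes `x^s` times the ascent generating function
of `Perm (Fin n)`. That function is `[n]_t!`: writing a permutation of `Fin (n + 1)` as its
value `p` at `0` followed by a permutation of the remaining values, the first position adds
exactly `n - p` ascents, and summing `t ^ (n - p)` over `p` gives `[n + 1]_t`.
-/

open MvPolynomial

/-- ascent statistic of a coloring of the complete graph `K_n`:
`asc(κ) = #{(i,j) : i < j, κ(i) < κ(j)}`. -/
def ascK (n N : ℕ) (κ : Fin n → Fin N) : ℕ :=
  (Finset.univ.filter fun p : Fin n × Fin n => p.1 < p.2 ∧ κ p.1 < κ p.2).card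

open Finset

lemma ascK_eq_sum {n N : ℕ} (κ : Fin n → Fin N) :
    ascK n N κ = ∑ i, ∑ j, if i < j ∧ κ i < κ j then 1 else 0 := by
  rw [ascK, card_filter, ← Fintype.sum_prod_type']

lemma ascK_cons {n N : ℕ} (a : Fin N) (f : Fin n → Fin N) :
    ascK (n + 1) N (Fin.cons a f) = #{j | a < f j} + ascK n N f := by
  simp only [ascK_eq_sum, card_filter, Fin.sum_univ_succ, Fin.cons_zero, Fin.cons_succ,
    Fin.succ_pos, Fin.succ_lt_succ_iff, Fin.not_lt_zero, false_and, true_and, if_false, zero_add]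

lemma ascK_comp_strictMono {n m M : ℕ} {g : Fin m → Fin M} (hg : StrictMono g)
    (κ : Fin n → Fin m) : ascK n M (g ∘ κ) = ascK n m κ := by
  simp only [ascK, Function.comp_apply, hg.lt_iff_lt]

lemma card_lt_succAbove {n : ℕ} (p : Fin (n + 1)) :
    #{i : Fin n | p < p.succAbove i} = n - p := by
  have h := card_filter_add_card_filter_not (s := (univ : Finset (Fin n))) (fun i => (i : ℕ) < p)
  simp only [Fin.card_filter_val_lt, card_univ, Fintype.card_fin, not_lt] at h
  simp only [Fin.lt_succAbove_iff_le_castSucc, Fin.le_def, Fin.val_castSucc]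
  have := p.is_le
  omega

namespace Equiv.Perm

noncomputable def consSuccAbove {n : ℕ} (p : Fin (n + 1)) (τ : Perm (Fin n)) :
    Perm (Fin (n + 1)) :=
  Equiv.ofBijective (Fin.cons p (p.succAbove ∘ τ)) <| Finite.injective_iff_bijective.1 <|
    Fin.cons_injective_iff.2 ⟨by simp, Fin.succAbove_right_injective.comp τ.injective⟩

lemma coe_consSuccAbove {n : ℕ} (p : Fin (n + 1)) (τ : Perm (Fin n)) :
    ⇑(consSuccAbove p τ) = Fin.cons p (p.succAbove ∘ τ) := rfl

lemma consSuccAbove_bijective (n : ℕ) :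
    Function.Bijective fun pτ : Fin (n + 1) × Perm (Fin n) => consSuccAbove pτ.1 pτ.2 := by
  refine (Fintype.bijective_iff_injective_and_card _).2 ⟨?_, ?_⟩
  · rintro ⟨p, τ⟩ ⟨p', τ'⟩ h
    have h' : (Fin.cons p (p.succAbove ∘ τ) : Fin (n + 1) → Fin (n + 1)) =
        Fin.cons p' (p'.succAbove ∘ τ') := congrArg DFunLike.coe h
    obtain ⟨rfl, h⟩ := Fin.cons_inj.1 h'
    exact Prod.ext rfl (Equiv.coe_inj.1 (Fin.succAbove_right_injective.comp_left h))
  · simp [Fintype.card_perm, Nat.factorial_succ]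

end Equiv.Perm

lemma ascK_consSuccAbove {n : ℕ} (p : Fin (n + 1)) (τ : Equiv.Perm (Fin n)) :
    ascK (n + 1) (n + 1) (Equiv.Perm.consSuccAbove p τ) = (n - p) + ascK n n τ := by
  rw [Equiv.Perm.coe_consSuccAbove, ascK_cons, ascK_comp_strictMono (Fin.strictMono_succAbove p),
    ← card_lt_succAbove p]
  congr 1
  exact card_equiv τ (by simp)

section

variable {R : Type*} [CommSemiring R]

theorem sum_perm_pow_ascK (t : R) (n : ℕ) :
    ∑ σ : Equiv.Perm (Fin n), t ^ ascK n n σ =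
      ∏ i ∈ range n, ∑ j ∈ range (i + 1), t ^ j := by
  induction n with
  | zero => simp [ascK]
  | succ n ih =>
    rw [← (Equiv.Perm.consSuccAbove_bijective n).sum_comp, Fintype.sum_prod_type]
    simp only [ascK_consSuccAbove, pow_add, ← mul_sum, ← sum_mul, ih, prod_range_succ]
    rw [mul_comm, Fin.sum_univ_eq_sum_range (fun i => t ^ (n - i)),
      ← sum_range_reflect (t ^ ·) (n + 1), add_tsub_cancel_right]

theorem sum_pow_ascK_of_image_eq (t : R) {n N : ℕ} {s : Finset (Fin N)} (hs : #s = n) :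
    ∑ κ ∈ {κ : Fin n → Fin N | Function.Injective κ} with image κ univ = s, t ^ ascK n N κ =
      ∏ i ∈ range n, ∑ j ∈ range (i + 1), t ^ j := by
  set g := s.orderEmbOfFin hs
  rw [← sum_perm_pow_ascK]
  symm
  refine sum_bij (fun σ _ => g ∘ σ) (fun σ _ => ?_) (fun σ _ σ' _ h => ?_) (fun κ hκ => ?_)
    (fun σ _ => by rw [ascK_comp_strictMono g.strictMono])
  · simp only [mem_filter, mem_univ, true_and]
    refine ⟨g.injective.comp σ.injective, ?_⟩
    rw [← image_image, image_univ_equiv, ← coe_inj, coe_image, coe_univ, Set.image_univ,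
      range_orderEmbOfFin]
  · exact Equiv.ext fun i => g.injective (congrFun h i)
  · simp only [mem_filter, mem_univ, true_and] at hκ
    obtain ⟨hinj, himg⟩ := hκ
    have hrange : Set.range κ ⊆ Set.range g := by
      rw [range_orderEmbOfFin, ← himg, coe_image, coe_univ, Set.image_univ]
    obtain ⟨ψ, rfl⟩ := Set.range_subset_range_iff_exists_comp.1 hrange
    exact ⟨Equiv.ofBijective ψ (Finite.injective_iff_bijective.1 hinj.of_comp), mem_univ _, rfl⟩

end

theorem cqf_complete_graph_general (n N : ℕ) :
    (∑ κ : Fin n → Fin N,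
        if Function.Injective κ then
          (MvPolynomial.C (Polynomial.X ^ ascK n N κ) *
            ∏ v : Fin n, MvPolynomial.X (κ v) : MvPolynomial (Fin N) (Polynomial ℤ))
        else 0) =
      (∏ i ∈ Finset.range n,
          MvPolynomial.C (∑ j ∈ Finset.range (i + 1), (Polynomial.X : Polynomial ℤ) ^ j)) *
        ∑ s ∈ Finset.powersetCard n (Finset.univ : Finset (Fin N)),
          ∏ v ∈ s, MvPolynomial.X v := by
  have himage : ∀ κ ∈ ({κ : Fin n → Fin N | Function.Injective κ} : Finset _),
      image κ univ ∈ powersetCard n univ := fun κ hκ => by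
    rw [mem_powersetCard, card_image_of_injective _ (mem_filter.1 hκ).2, card_fin]
    exact ⟨subset_univ _, rfl⟩
  rw [← sum_filter, ← sum_fiberwise_of_maps_to himage, mul_sum]
  refine sum_congr rfl fun s hs => ?_
  calc _ = ∑ κ ∈ {κ : Fin n → Fin N | Function.Injective κ} with image κ univ = s,
        C (Polynomial.X ^ ascK n N κ) * ∏ v ∈ s, (X v : MvPolynomial (Fin N) (Polynomial ℤ)) := by
        refine sum_congr rfl fun κ hκ => ?_
        simp only [mem_filter, mem_univ, true_and] at hκ
        obtain ⟨hinj, rfl⟩ := hκ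
        rw [prod_image hinj.injOn]
    _ = _ := by
      rw [← sum_mul, ← map_sum, sum_pow_ascK_of_image_eq _ (mem_powersetCard.1 hs).2, map_prod]

theorem cqf_complete_graph (n N : ℕ) (hn : 1 ≤ n) (hN : 1 ≤ N) :
    (∑ κ : Fin n → Fin N,
        if Function.Injective κ then
          (MvPolynomial.C (Polynomial.X ^ ascK n N κ) *
            ∏ v : Fin n, MvPolynomial.X (κ v) : MvPolynomial (Fin N) (Polynomial ℤ))
        else 0) =
      (∏ i ∈ Finset.range n,
          MvPolynomial.C (∑ j ∈ Finset.range (i + 1), (Polynomial.X : Polynomial ℤ) ^ j)) *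
        ∑ s ∈ Finset.powersetCard n (Finset.univ : Finset (Fin N)),
          ∏ v ∈ s, MvPolynomial.X v :=
  cqf_complete_graph_general n N
end

section
/- Modular law for chromatic symmetric functions at t = 1 in a special case: let n ≥ 3 and let Ψ₀ ⊊ Ψ ⊊ Ψ₁ ⊂ Δ⁺ be root ideals with |Ψ₀|+1 = |Ψ| = |Ψ₁|−1, such that for some 1 ≤ i < n both Ψ₀ and Ψ₁ are stable under the transposition s_i (acting on roots by permuting indices i and i+1), and Ψ∖Ψ₀ = {α_{i,j}}, Ψ₁∖Ψ = {α_{i+1,j}} for some i < j < n. Then the chromatic symmetric functions (in variables x₁,…,x_N) of the corresponding unit interval graphs satisfy 2·X_{Γ_h} = X_{Γ_{h₀}} + X_{Γ_{h₁}}, where h, h₀, h₁ are the Hessenberg functions of Ψ, Ψ₀, Ψ₁. -/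
/-- A root ideal in Δ⁺ of type A_{n-1}, roots `α_{i,j}` encoded as pairs `(i,j)`, `1 ≤ i < j ≤ n`. -/
def IsRootIdeal (n : ℕ) (Ψ : Set (ℕ × ℕ)) : Prop :=
  (∀ p ∈ Ψ, 1 ≤ p.1 ∧ p.1 < p.2 ∧ p.2 ≤ n) ∧
  (∀ p ∈ Ψ, ∀ i' j', 1 ≤ i' → i' ≤ p.1 → p.2 ≤ j' → j' ≤ n → (i', j') ∈ Ψ)

/-- `h_Ψ(i) = max({j : α_{i,j} ∉ Ψ} ∪ {i})`. -/
noncomputable def toHess (n : ℕ) (Ψ : Set (ℕ × ℕ)) (i : ℕ) : ℕ :=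
  sSup ({j | i < j ∧ j ≤ n ∧ (i, j) ∉ Ψ} ∪ {i})

/-- the transposition of indices `i ↔ i+1`. -/
def swapIdx (i k : ℕ) : ℕ := if k = i then i + 1 else if k = i + 1 then i else k

/-- `Ψ` is stable under the action of `s_i` permuting the indices `i` and `i+1`. -/
def SStable (i : ℕ) (Ψ : Set (ℕ × ℕ)) : Prop :=
  ∀ p ∈ Ψ, (swapIdx i p.1, swapIdx i p.2) ∈ Ψ ∨ (swapIdx i p.2, swapIdx i p.1) ∈ Ψ

/-- Chromatic symmetric function (in `x₁,…,x_N`) of `Γ_h`; vertex `v : Fin n` is `v+1 ∈ [n]`. -/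
noncomputable def csf (n N : ℕ) (h : ℕ → ℕ) : MvPolynomial (Fin N) ℤ :=
  ∑ κ : Fin n → Fin N,
    if ∀ a b : Fin n, (a : ℕ) < (b : ℕ) → (b : ℕ) + 1 ≤ h ((a : ℕ) + 1) → κ a ≠ κ b then
      ∏ v : Fin n, MvPolynomial.X (κ v)
    else 0

lemma toHess_ge_iff {n : ℕ} {Ψ : Set (ℕ × ℕ)} (hΨ : IsRootIdeal n Ψ) {a b : ℕ}
    (ha : 1 ≤ a) (hab : a < b) (hbn : b ≤ n) : b ≤ toHess n Ψ a ↔ (a, b) ∉ Ψ := by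
  have hbdd : BddAbove ({j | a < j ∧ j ≤ n ∧ (a, j) ∉ Ψ} ∪ {a}) := by
    refine ⟨n, fun x hx => ?_⟩
    rcases hx with hx | hx
    · exact hx.2.1
    · simp only [Set.mem_singleton_iff] at hx; omega
  have hne : ({j | a < j ∧ j ≤ n ∧ (a, j) ∉ Ψ} ∪ {a}).Nonempty := ⟨a, Or.inr rfl⟩
  constructor
  · intro hb hmem
    have hsup := Nat.sSup_mem hne hbdd
    unfold toHess at hb
    rcases hsup with hsup | hsup
    · exact hsup.2.2 (hΨ.2 _ hmem a (sSup _) ha le_rfl hb hsup.2.1)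
    · simp only [Set.mem_singleton_iff] at hsup; omega
  · intro hmem
    exact le_csSup hbdd (Or.inl ⟨hab, hbn, hmem⟩)

lemma swapIdx_swapIdx (i k : ℕ) : swapIdx i (swapIdx i k) = k := by
  unfold swapIdx; split_ifs <;> omega

lemma mem_of_swap {n i : ℕ} {Ψ : Set (ℕ × ℕ)} (hΨ : IsRootIdeal n Ψ) (hs : SStable i Ψ)
    {p q : ℕ} (hpq : p < q)
    (h : (swapIdx i p, swapIdx i q) ∈ Ψ ∨ (swapIdx i q, swapIdx i p) ∈ Ψ) : (p, q) ∈ Ψ := by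
  rcases h with h | h
  · rcases hs _ h with h' | h' <;> simp only [swapIdx_swapIdx] at h'
    · exact h'
    · exact absurd ((hΨ.1 _ h').2.1) (by omega)
  · rcases hs _ h with h' | h' <;> simp only [swapIdx_swapIdx] at h'
    · exact absurd ((hΨ.1 _ h').2.1) (by omega)
    · exact h'

/-- Properness of a coloring with respect to the graph of a root ideal. -/
def Proper (n N : ℕ) (Ψ : Set (ℕ × ℕ)) (κ : Fin n → Fin N) : Prop :=
  ∀ a b : Fin n, (a : ℕ) < (b : ℕ) → ((a : ℕ) + 1, (b : ℕ) + 1) ∉ Ψ → κ a ≠ κ b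

open Classical in
lemma csf_eq_sum (n N : ℕ) (Ψ : Set (ℕ × ℕ)) (hΨ : IsRootIdeal n Ψ) :
    csf n N (toHess n Ψ) =
      ∑ κ : Fin n → Fin N,
        if Proper n N Ψ κ then ∏ v : Fin n, MvPolynomial.X (κ v) else 0 := by
  classical
  unfold csf
  refine Finset.sum_congr rfl fun κ _ => ?_
  refine if_congr ?_ rfl rfl
  unfold Proper
  constructor <;> intro H a b hab hm <;> have hb := b.isLt
  · exact H a b hab ((toHess_ge_iff hΨ (by omega) (by omega) (by omega)).mpr hm)
  · exact H a b hab ((toHess_ge_iff hΨ (by omega) (by omega) (by omega)).mp hm)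

lemma ite_sub_ite_of_imp {R : Type*} [CommRing R] (p q : Prop) [Decidable p] [Decidable q]
    (h : q → p) (m : R) :
    (if p then m else 0) - (if q then m else 0) = if p ∧ ¬q then m else 0 := by
  by_cases hp : p
  · by_cases hq : q
    · rw [if_pos hp, if_pos hq, if_neg (fun hc => hc.2 hq)]; ring
    · rw [if_pos hp, if_neg hq, if_pos ⟨hp, hq⟩]; ring
  · by_cases hq : q
    · exact absurd (h hq) hp
    · rw [if_neg hp, if_neg hq, if_neg (fun hc => hp hc.1)]; ring

theorem modular_law_t_one (n N : ℕ) (hn : 3 ≤ n) (hN : 1 ≤ N)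
    (Ψ₀ Ψ Ψ₁ : Set (ℕ × ℕ))
    (h₀ : IsRootIdeal n Ψ₀) (hmid : IsRootIdeal n Ψ) (h₁ : IsRootIdeal n Ψ₁)
    (hss₀ : Ψ₀ ⊂ Ψ) (hss₁ : Ψ ⊂ Ψ₁)
    (hcard₀ : Ψ₀.ncard + 1 = Ψ.ncard) (hcard₁ : Ψ.ncard + 1 = Ψ₁.ncard)
    (i j : ℕ) (hi : 1 ≤ i) (hin : i < n) (hij : i < j) (hjn : j < n)
    (hstab₀ : SStable i Ψ₀) (hstab₁ : SStable i Ψ₁)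
    (hdiff₀ : Ψ \ Ψ₀ = {(i, j)}) (hdiff₁ : Ψ₁ \ Ψ = {(i + 1, j)}) :
    2 • csf n N (toHess n Ψ) = csf n N (toHess n Ψ₀) + csf n N (toHess n Ψ₁) := by
  classical
  -- basic membership facts
  have hI : (i, j) ∈ Ψ ∧ (i, j) ∉ Ψ₀ := by
    have h : (i, j) ∈ Ψ \ Ψ₀ := by rw [hdiff₀]; rfl
    exact ⟨h.1, h.2⟩
  have hJ : (i + 1, j) ∈ Ψ₁ ∧ (i + 1, j) ∉ Ψ := by
    have h : (i + 1, j) ∈ Ψ₁ \ Ψ := by rw [hdiff₁]; rfl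
    exact ⟨h.1, h.2⟩
  have hij2 : i + 1 < j := (h₁.1 _ hJ.1).2.1
  have hΨ₀eq : ∀ p, p ∈ Ψ₀ ↔ p ∈ Ψ ∧ p ≠ (i, j) := by
    intro p
    constructor
    · exact fun hp => ⟨hss₀.subset hp, fun he => hI.2 (he ▸ hp)⟩
    · rintro ⟨hp, hne⟩
      by_contra h
      have h2 : p ∈ Ψ \ Ψ₀ := ⟨hp, h⟩
      rw [hdiff₀] at h2
      exact hne h2
  have hΨ₁eq : ∀ p, p ∈ Ψ₁ ↔ p ∈ Ψ ∨ p = (i + 1, j) := by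
    intro p
    constructor
    · intro hp
      by_cases h : p ∈ Ψ
      · exact Or.inl h
      · right
        have h2 : p ∈ Ψ₁ \ Ψ := ⟨hp, h⟩
        rw [hdiff₁] at h2
        exact h2
    · rintro (hp | rfl)
      · exact hss₁.subset hp
      · exact hJ.1
  have hiip1 : (i, i + 1) ∉ Ψ₁ := by
    intro h
    rcases (hΨ₁eq _).mp h with h | h
    · have h0 : (i, i + 1) ∈ Ψ₀ :=
        (hΨ₀eq _).mpr ⟨h, by intro he; rw [Prod.mk.injEq] at he; omega⟩
      exact hI.2 (h₀.2 _ h0 i j hi le_rfl (by omega) (by omega))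
    · rw [Prod.mk.injEq] at h; omega
  -- vertices
  have hin' : i - 1 < n := by omega
  have hjn' : j - 1 < n := by omega
  set vi : Fin n := ⟨i - 1, hin'⟩ with hvi_def
  set vi1 : Fin n := ⟨i, hin⟩ with hvi1_def
  set vj : Fin n := ⟨j - 1, hjn'⟩ with hvj_def
  have hvi : (vi : ℕ) + 1 = i := by rw [hvi_def]; show i - 1 + 1 = i; omega
  have hvi1 : (vi1 : ℕ) + 1 = i + 1 := by rw [hvi1_def]
  have hvj : (vj : ℕ) + 1 = j := by rw [hvj_def]; show j - 1 + 1 = j; omega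
  have hvivj : (vi : ℕ) < (vj : ℕ) := by omega
  have hvi1vj : (vi1 : ℕ) < (vj : ℕ) := by omega
  have hvivi1 : (vi : ℕ) < (vi1 : ℕ) := by omega
  set σ : Equiv.Perm (Fin n) := Equiv.swap vi vi1 with hσ_def
  have hσvi : σ vi = vi1 := Equiv.swap_apply_left _ _
  have hσvi1 : σ vi1 = vi := Equiv.swap_apply_right _ _
  have hσvj : σ vj = vj := by
    apply Equiv.swap_apply_of_ne_of_ne <;> (intro h; rw [Fin.ext_iff] at h; omega)
  have labelσ : ∀ v : Fin n, ((σ v : ℕ)) + 1 = swapIdx i ((v : ℕ) + 1) := by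
    intro v
    rcases eq_or_ne v vi with rfl | h1
    · rw [hσvi]
      unfold swapIdx
      split_ifs <;> omega
    · rcases eq_or_ne v vi1 with rfl | h2
      · rw [hσvi1]
        unfold swapIdx
        split_ifs <;> omega
      · rw [hσ_def, Equiv.swap_apply_of_ne_of_ne h1 h2]
        have hv1 : (v : ℕ) + 1 ≠ i := by
          intro h; apply h1; rw [Fin.ext_iff]; omega
        have hv2 : (v : ℕ) + 1 ≠ i + 1 := by
          intro h; apply h2; rw [Fin.ext_iff]; omega
        unfold swapIdx
        split_ifs <;> omega
  -- step lemmas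
  have hPP₁ : ∀ κ : Fin n → Fin N, Proper n N Ψ κ → Proper n N Ψ₁ κ := by
    intro κ H a b hab hm
    exact H a b hab fun h => hm (hss₁.subset h)
  have hP₀P : ∀ κ : Fin n → Fin N, Proper n N Ψ₀ κ → Proper n N Ψ κ := by
    intro κ H a b hab hm
    exact H a b hab fun h => hm (hss₀.subset h)
  have stepA : ∀ κ : Fin n → Fin N,
      (Proper n N Ψ κ ∧ ¬ Proper n N Ψ₀ κ) ↔ (Proper n N Ψ κ ∧ κ vi = κ vj) := by
    intro κ
    constructor
    · rintro ⟨hp, hnp⟩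
      refine ⟨hp, ?_⟩
      unfold Proper at hnp
      push_neg at hnp
      obtain ⟨a, b, hab, hm0, hab2⟩ := hnp
      have hmem : ((a : ℕ) + 1, (b : ℕ) + 1) ∈ Ψ := by
        by_contra hx
        exact hp a b hab hx hab2
      have heq : ((a : ℕ) + 1, (b : ℕ) + 1) = (i, j) := by
        by_contra hne
        exact hm0 ((hΨ₀eq _).mpr ⟨hmem, hne⟩)
      rw [Prod.mk.injEq] at heq
      have ha' : a = vi := by rw [Fin.ext_iff]; omega
      have hb' : b = vj := by rw [Fin.ext_iff]; omega
      rw [← ha', ← hb']; exact hab2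
    · rintro ⟨hp, he⟩
      refine ⟨hp, fun hp0 => ?_⟩
      exact hp0 vi vj hvivj (by rw [hvi, hvj]; exact hI.2) he
  have stepB : ∀ κ : Fin n → Fin N,
      (Proper n N Ψ₁ κ ∧ ¬ Proper n N Ψ κ) ↔ (Proper n N Ψ₁ κ ∧ κ vi1 = κ vj) := by
    intro κ
    constructor
    · rintro ⟨hp, hnp⟩
      refine ⟨hp, ?_⟩
      unfold Proper at hnp
      push_neg at hnp
      obtain ⟨a, b, hab, hm0, hab2⟩ := hnp
      have hmem : ((a : ℕ) + 1, (b : ℕ) + 1) ∈ Ψ₁ := by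
        by_contra hx
        exact hp a b hab hx hab2
      have heq : ((a : ℕ) + 1, (b : ℕ) + 1) = (i + 1, j) := by
        rcases (hΨ₁eq _).mp hmem with h | h
        · exact absurd h hm0
        · exact h
      rw [Prod.mk.injEq] at heq
      have ha' : a = vi1 := by rw [Fin.ext_iff]; omega
      have hb' : b = vj := by rw [Fin.ext_iff]; omega
      rw [← ha', ← hb']; exact hab2
    · rintro ⟨hp, he⟩
      refine ⟨hp, fun hpm => ?_⟩
      exact hpm vi1 vj hvi1vj (by rw [hvi1, hvj]; exact hJ.2) he
  have stepC : ∀ κ : Fin n → Fin N, κ vi = κ vj →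
      (Proper n N Ψ κ ↔ Proper n N Ψ₁ κ) := by
    intro κ he
    constructor
    · exact hPP₁ κ
    · intro H a b hab hm
      by_cases hx : ((a : ℕ) + 1, (b : ℕ) + 1) ∈ Ψ₁
      · rcases (hΨ₁eq _).mp hx with h | h
        · exact absurd h hm
        · rw [Prod.mk.injEq] at h
          have ha' : a = vi1 := by rw [Fin.ext_iff]; omega
          have hb' : b = vj := by rw [Fin.ext_iff]; omega
          subst ha'; subst hb'
          have hne : κ vi ≠ κ vi1 :=
            H vi vi1 hvivi1 (by rw [hvi, hvi1]; exact hiip1)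
          intro hc
          exact hne (he.trans hc.symm)
      · exact H a b hab hx
  have hconj : ∀ κ : Fin n → Fin N, Proper n N Ψ₁ κ → Proper n N Ψ₁ (κ ∘ σ) := by
    intro κ H a b hab hm
    have hab' : a ≠ b := by intro h; subst h; exact lt_irrefl _ hab
    have hσne : σ a ≠ σ b := σ.injective.ne hab'
    show κ (σ a) ≠ κ (σ b)
    rcases lt_or_gt_of_ne hσne with h1 | h1
    · have hm' : ((σ a : ℕ) + 1, (σ b : ℕ) + 1) ∉ Ψ₁ := by
        intro hx
        apply hm
        apply mem_of_swap h₁ hstab₁ (show (a : ℕ) + 1 < (b : ℕ) + 1 by omega)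
        left
        rw [labelσ a, labelσ b] at hx
        exact hx
      exact H (σ a) (σ b) h1 hm'
    · have hm' : ((σ b : ℕ) + 1, (σ a : ℕ) + 1) ∉ Ψ₁ := by
        intro hx
        apply hm
        apply mem_of_swap h₁ hstab₁ (show (a : ℕ) + 1 < (b : ℕ) + 1 by omega)
        right
        rw [labelσ a, labelσ b] at hx
        exact hx
      exact (H (σ b) (σ a) h1 hm').symm
  have hcc : ∀ κ : Fin n → Fin N, (κ ∘ σ) ∘ σ = κ := by
    intro κ
    funext v
    simp [hσ_def, Function.comp, Equiv.swap_apply_self]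
  have stepSym : ∀ κ : Fin n → Fin N, Proper n N Ψ₁ (κ ∘ σ) ↔ Proper n N Ψ₁ κ := by
    intro κ
    constructor
    · intro H
      have h2 := hconj (κ ∘ σ) H
      rwa [hcc] at h2
    · exact hconj κ
  -- rewrite and reduce to a per-coloring identity
  rw [csf_eq_sum n N Ψ hmid, csf_eq_sum n N Ψ₀ h₀, csf_eq_sum n N Ψ₁ h₁]
  have key :
      ((∑ κ : Fin n → Fin N, if Proper n N Ψ κ then ∏ v : Fin n, MvPolynomial.X (κ v) else 0 :
        MvPolynomial (Fin N) ℤ)) -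
      (∑ κ : Fin n → Fin N, if Proper n N Ψ₀ κ then ∏ v : Fin n, MvPolynomial.X (κ v) else 0) =
      (∑ κ : Fin n → Fin N, if Proper n N Ψ₁ κ then ∏ v : Fin n, MvPolynomial.X (κ v) else 0) -
      (∑ κ : Fin n → Fin N, if Proper n N Ψ κ then ∏ v : Fin n, MvPolynomial.X (κ v) else 0) := by
    rw [← Finset.sum_sub_distrib, ← Finset.sum_sub_distrib]
    have hbij : Function.Bijective (fun κ : Fin n → Fin N => κ ∘ σ) := by
      apply Function.Involutive.bijective
      intro κ
      exact hcc κ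
    refine Fintype.sum_bijective _ hbij _ _ ?_
    intro κ
    show ((if Proper n N Ψ κ then ∏ v : Fin n, MvPolynomial.X (κ v) else 0) -
        (if Proper n N Ψ₀ κ then ∏ v : Fin n, MvPolynomial.X (κ v) else 0) :
          MvPolynomial (Fin N) ℤ) =
        ((if Proper n N Ψ₁ (κ ∘ σ) then ∏ v : Fin n, MvPolynomial.X ((κ ∘ σ) v) else 0) -
        (if Proper n N Ψ (κ ∘ σ) then ∏ v : Fin n, MvPolynomial.X ((κ ∘ σ) v) else 0))
    have hprod : (∏ v : Fin n, MvPolynomial.X ((κ ∘ σ) v) : MvPolynomial (Fin N) ℤ) =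
        ∏ v : Fin n, MvPolynomial.X (κ v) :=
      Equiv.prod_comp σ (fun v => MvPolynomial.X (κ v))
    rw [hprod]
    have h1 := hP₀P κ
    have h2 := hPP₁ (κ ∘ σ)
    have h3 : (Proper n N Ψ κ ∧ ¬ Proper n N Ψ₀ κ) ↔
        (Proper n N Ψ₁ (κ ∘ σ) ∧ ¬ Proper n N Ψ (κ ∘ σ)) := by
      rw [stepA κ, stepB (κ ∘ σ)]
      have heσ : ((κ ∘ σ) vi1 = (κ ∘ σ) vj) ↔ (κ vi = κ vj) := by
        show (κ (σ vi1) = κ (σ vj)) ↔ _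
        rw [hσvi1, hσvj]
      constructor
      · rintro ⟨hp, he⟩
        exact ⟨(stepSym κ).mpr ((stepC κ he).mp hp), heσ.mpr he⟩
      · rintro ⟨hp1, he⟩
        have he' : κ vi = κ vj := heσ.mp he
        exact ⟨(stepC κ he').mpr ((stepSym κ).mp hp1), he'⟩
    have h2' : Proper n N Ψ (κ ∘ σ) → Proper n N Ψ₁ (κ ∘ σ) := h2
    rw [ite_sub_ite_of_imp _ _ h1 _, ite_sub_ite_of_imp _ _ h2' _]
    exact if_congr h3 rfl rfl
  rw [two_smul]
  linear_combination key
end
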